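/- Let r : ℝ → ℝ be continuous and 1-periodic, let b : ℝ → ℝ be continuously differentiable and 1-periodic, and let λ ∈ ℝ. Suppose that for every L > 0 there are a real number K(L) and a twice continuously differentiable function φ_L : ℝ → ℝ that is L-periodic, positive on ℝ, normalized by ∫₀¹ φ_L(x)² dx = 1, and satisfies φ_L''(x) − d/dx[(b(x/L) + 2λ) φ_L(x)] + (r(x/L) + λ b(x/L) + λ²) φ_L(x) = K(L) φ_L(x) for all x ∈ ℝ. Then K(L) converges, as L → 0⁺, to ∫₀¹ r(s) ds + λ ∫₀¹ b(s) ds + λ². -/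

import Mathlib

/-!
Write `u = φ'/φ` and `ω = u - c`. Dividing the equation by `φ` gives the Riccati equation
`ω' = K - V - u ω`, in which, unlike in the equation for `u`, the derivative of `c` does not
appear: for `c = b(·/L) + 2λ` all its coefficients are bounded uniformly in `L`. Integrating
the equation over a period and using `φ > 0` gives `|K| ≤ sup |V|`, and the maximum principle
at the extrema of `ω` then bounds `ω`, `u` and `ω'` uniformly, so `ω` oscillates by `O(L)` over
a period. Integrating the Riccati equation over a period gives `∫ u ω = K L - ∫ V`; since
`∫ u = 0` (`log φ` is periodic) the left side equals `∫ u (ω - ω 0) = O(L²)`. Finally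
`∫₀ᴸ V = L (∫₀¹ r + λ ∫₀¹ b + λ²)` by rescaling.
-/

open Function Set Filter Topology intervalIntegral

namespace Function.Periodic

variable {f f' : ℝ → ℝ} {L : ℝ}

theorem exists_abs_le_of_continuous (h : Periodic f L) (hL : L ≠ 0) (hf : Continuous f) :
    ∃ C, ∀ x, |f x| ≤ C := by
  obtain ⟨C, hC⟩ := (h.isBounded_of_continuous hL hf).exists_norm_le
  exact ⟨C, fun x => hC _ ⟨x, rfl⟩⟩

theorem exists_forall_ge_of_continuous (h : Periodic f L) (hL : L ≠ 0) (hf : Continuous f) :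
    ∃ a, ∀ x, f x ≤ f a := by
  obtain ⟨_, ⟨a, rfl⟩, ha⟩ :=
    (h.compact_of_continuous hL hf).exists_isGreatest (range_nonempty f)
  exact ⟨a, fun x => ha ⟨x, rfl⟩⟩

theorem exists_forall_le_of_continuous (h : Periodic f L) (hL : L ≠ 0) (hf : Continuous f) :
    ∃ a, ∀ x, f a ≤ f x := by
  obtain ⟨_, ⟨a, rfl⟩, ha⟩ :=
    (h.compact_of_continuous hL hf).exists_isLeast (range_nonempty f)
  exact ⟨a, fun x => ha ⟨x, rfl⟩⟩

protected theorem deriv (h : Periodic f L) : Periodic (deriv f) L := fun x => by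
  rw [← deriv_comp_add_const, funext h]

theorem intervalIntegral_eq_zero_of_hasDerivAt (h : Periodic f L)
    (hf : ∀ x, HasDerivAt f (f' x) x) (hf' : Continuous f') :
    ∫ x in (0 : ℝ)..L, f' x = 0 := by
  rw [integral_eq_sub_of_hasDerivAt (fun x _ => hf x) (hf'.intervalIntegrable _ _),
    ← zero_add L, h 0, sub_self]

theorem abs_le_of_abs_le_at_critical (h : Periodic f L) (hL : L ≠ 0)
    (hf : ∀ x, HasDerivAt f (f' x) x) {M : ℝ} (hM : ∀ x, f' x = 0 → |f x| ≤ M) (x : ℝ) :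
    |f x| ≤ M := by
  have hfc : Continuous f := continuous_iff_continuousAt.2 fun x => (hf x).continuousAt
  obtain ⟨a, ha⟩ := h.exists_forall_ge_of_continuous hL hfc
  obtain ⟨b, hb⟩ := h.exists_forall_le_of_continuous hL hfc
  have hMa := hM a (IsLocalMax.hasDerivAt_eq_zero (.of_forall ha) (hf a))
  have hMb := hM b (IsLocalMin.hasDerivAt_eq_zero (.of_forall hb) (hf b))
  rw [abs_le] at hMa hMb ⊢
  exact ⟨hMb.1.trans (hb x), (ha x).trans hMa.2⟩

theorem abs_sub_le_of_abs_deriv_le (h : Periodic f L) (hL : 0 < L)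
    (hf : ∀ x, HasDerivAt f (f' x) x) {M : ℝ} (hM : ∀ x, |f' x| ≤ M) (x y : ℝ) :
    |f y - f x| ≤ M * L := by
  obtain ⟨z, hz, hyz⟩ := h.exists_mem_Ico hL y x
  rw [hyz]
  calc |f z - f x| ≤ M * |z - x| :=
        Convex.norm_image_sub_le_of_norm_hasDerivWithin_le (fun t _ => (hf t).hasDerivWithinAt)
          (fun t _ => hM t) convex_univ (mem_univ x) (mem_univ z)
    _ ≤ M * L := by
        gcongr
        · exact (abs_nonneg _).trans (hM 0)
        · rw [abs_le]; constructor <;> linarith [hz.1, hz.2]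

end Function.Periodic

theorem tendsto_nhdsWithin_Ioi_of_abs_sub_le_mul {f : ℝ → ℝ} {a C : ℝ}
    (h : ∀ x, 0 < x → |f x - a| ≤ C * x) : Tendsto f (𝓝[>] 0) (𝓝 a) := by
  have hC : Tendsto (fun x : ℝ => C * x) (𝓝[>] 0) (𝓝 0) := by
    simpa using ((continuous_const_mul C).tendsto 0).mono_left nhdsWithin_le_nhds
  rw [tendsto_iff_norm_sub_tendsto_zero]
  exact squeeze_zero' (.of_forall fun _ => norm_nonneg _)
    (eventually_nhdsWithin_of_forall fun x hx => h x hx) hC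

section AdjointEigenproblem

variable {φ c V : ℝ → ℝ} {K L : ℝ}

theorem hasDerivAt_mul_of_contDiff (hφ : ContDiff ℝ 2 φ) (hc : ContDiff ℝ 1 c) (x : ℝ) :
    HasDerivAt (fun y => c y * φ y) (deriv c x * φ x + c x * deriv φ x) x :=
  ((hc.differentiable one_ne_zero x).hasDerivAt).mul
    ((hφ.differentiable (by norm_num) x).hasDerivAt)

theorem integral_potential_mul_eq (hφ : ContDiff ℝ 2 φ) (hφper : Periodic φ L)
    (hc : ContDiff ℝ 1 c) (hcper : Periodic c L)
    (heq : ∀ x, deriv (deriv φ) x - deriv (fun y => c y * φ y) x + V x * φ x = K * φ x) :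
    ∫ x in (0 : ℝ)..L, V x * φ x = K * ∫ x in (0 : ℝ)..L, φ x := by
  have hφ' : ContDiff ℝ 1 (deriv φ) := hφ.deriv'
  have hφ''c : Continuous (deriv (deriv φ)) := hφ'.continuous_deriv le_rfl
  have hfluxc : Continuous fun x => deriv c x * φ x + c x * deriv φ x :=
    ((hc.continuous_deriv le_rfl).mul hφ.continuous).add (hc.continuous.mul hφ'.continuous)
  have hφ'' : ∫ x in (0 : ℝ)..L, deriv (deriv φ) x = 0 :=
    hφper.deriv.intervalIntegral_eq_zero_of_hasDerivAt
      (fun x => (hφ'.differentiable one_ne_zero x).hasDerivAt) hφ''c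
  have hflux : ∫ x in (0 : ℝ)..L, (deriv c x * φ x + c x * deriv φ x) = 0 :=
    (hcper.mul hφper).intervalIntegral_eq_zero_of_hasDerivAt
      (hasDerivAt_mul_of_contDiff hφ hc) hfluxc
  have hVφ : ∀ x, V x * φ x
      = K * φ x - deriv (deriv φ) x + (deriv c x * φ x + c x * deriv φ x) := fun x => by
    rw [← (hasDerivAt_mul_of_contDiff hφ hc x).deriv]
    linarith [heq x]
  have hKφ : Continuous fun x => K * φ x := continuous_const.mul hφ.continuous
  simp_rw [hVφ]
  rw [integral_add ((hKφ.fun_sub hφ''c).intervalIntegrable _ _) (hfluxc.intervalIntegrable _ _),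
    integral_sub (hKφ.intervalIntegrable _ _) (hφ''c.intervalIntegrable _ _), integral_const_mul,
    hφ'', hflux, sub_zero, add_zero]

theorem abs_eigenvalue_le (hL : 0 < L) (hφ : ContDiff ℝ 2 φ) (hφper : Periodic φ L)
    (hφpos : ∀ x, 0 < φ x) (hc : ContDiff ℝ 1 c) (hcper : Periodic c L) (hV : Continuous V)
    {M : ℝ} (hVM : ∀ x, |V x| ≤ M)
    (heq : ∀ x, deriv (deriv φ) x - deriv (fun y => c y * φ y) x + V x * φ x = K * φ x) :
    |K| ≤ M := by
  have hφc := hφ.continuous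
  have hmass : 0 < ∫ x in (0 : ℝ)..L, φ x :=
    intervalIntegral_pos_of_pos (hφc.intervalIntegrable _ _) hφpos hL
  refine le_of_mul_le_mul_right ?_ hmass
  calc |K| * ∫ x in (0 : ℝ)..L, φ x = |∫ x in (0 : ℝ)..L, V x * φ x| := by
        rw [integral_potential_mul_eq hφ hφper hc hcper heq, abs_mul, abs_of_pos hmass]
    _ ≤ ∫ x in (0 : ℝ)..L, |V x * φ x| := abs_integral_le_integral_abs hL.le
    _ ≤ ∫ x in (0 : ℝ)..L, M * φ x := by
        refine integral_mono_on hL.le ((hV.mul hφc).abs.intervalIntegrable _ _)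
          ((continuous_const.mul hφc).intervalIntegrable _ _) fun x _ => ?_
        rw [abs_mul, abs_of_pos (hφpos x)]
        exact mul_le_mul_of_nonneg_right (hVM x) (hφpos x).le
    _ = M * ∫ x in (0 : ℝ)..L, φ x := integral_const_mul _ _

theorem hasDerivAt_logDeriv_sub (hφ : ContDiff ℝ 2 φ) (hφ0 : ∀ x, φ x ≠ 0)
    (hc : ContDiff ℝ 1 c)
    (heq : ∀ x, deriv (deriv φ) x - deriv (fun y => c y * φ y) x + V x * φ x = K * φ x)
    (x : ℝ) :
    HasDerivAt (fun y => logDeriv φ y - c y)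
      (K - V x - logDeriv φ x * (logDeriv φ x - c x)) x := by
  have hφ'' : deriv (deriv φ) x
      = K * φ x - V x * φ x + (deriv c x * φ x + c x * deriv φ x) := by
    rw [← (hasDerivAt_mul_of_contDiff hφ hc x).deriv]
    linarith [heq x]
  refine ((hφ.deriv'.differentiable one_ne_zero x).hasDerivAt.fun_div
    (hφ.differentiable (by norm_num) x).hasDerivAt (hφ0 x)).fun_sub
    (hc.differentiable one_ne_zero x).hasDerivAt |>.congr_deriv ?_
  rw [hφ'', logDeriv_apply]
  field_simp [hφ0 x]
  ring

theorem continuous_logDeriv_of_contDiff (hφ : ContDiff ℝ 1 φ) (hφ0 : ∀ x, φ x ≠ 0) :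
    Continuous (logDeriv φ) :=
  (hφ.continuous_deriv le_rfl).div hφ.continuous hφ0

theorem integral_logDeriv_eq_zero (hφ : ContDiff ℝ 2 φ) (hφper : Periodic φ L)
    (hφpos : ∀ x, 0 < φ x) : ∫ x in (0 : ℝ)..L, logDeriv φ x = 0 :=
  (hφper.comp Real.log).intervalIntegral_eq_zero_of_hasDerivAt
    (fun x => (hφ.differentiable (by norm_num) x).hasDerivAt.log (hφpos x).ne')
    (continuous_logDeriv_of_contDiff (hφ.of_le (by norm_num)) fun x => (hφpos x).ne')

theorem abs_eigenvalue_mul_sub_integral_le (hL : 0 < L) (hφ : ContDiff ℝ 2 φ)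
    (hφper : Periodic φ L) (hφpos : ∀ x, 0 < φ x) (hc : ContDiff ℝ 1 c)
    (hcper : Periodic c L) (hV : Continuous V) {Mc MV : ℝ} (hcM : ∀ x, |c x| ≤ Mc)
    (hVM : ∀ x, |V x| ≤ MV)
    (heq : ∀ x, deriv (deriv φ) x - deriv (fun y => c y * φ y) x + V x * φ x = K * φ x) :
    |K * L - ∫ x in (0 : ℝ)..L, V x|
      ≤ (1 + 2 * Mc + 2 * MV) * (2 * MV + (1 + 2 * Mc + 2 * MV) ^ 2) * L ^ 2 := by
  set M := 1 + 2 * Mc + 2 * MV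
  set u := logDeriv φ
  set ω := fun y => u y - c y
  have hMc : 0 ≤ Mc := (abs_nonneg _).trans (hcM 0)
  have hMV : 0 ≤ MV := (abs_nonneg _).trans (hVM 0)
  have hK : |K| ≤ MV := abs_eigenvalue_le hL hφ hφper hφpos hc hcper hV hVM heq
  have hω' : ∀ x, HasDerivAt ω (K - V x - u x * ω x) x :=
    hasDerivAt_logDeriv_sub hφ (fun x => (hφpos x).ne') hc heq
  have huc : Continuous u :=
    continuous_logDeriv_of_contDiff (hφ.of_le (by norm_num)) fun x => (hφpos x).ne'
  have hωc : Continuous ω := huc.sub hc.continuous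
  have hωper : Periodic ω L := fun x => by
    simp only [ω, u, logDeriv_apply, hφper x, hφper.deriv x, hcper x]
  have hωM : ∀ x, |ω x| ≤ 1 + Mc + 2 * MV := by
    refine hωper.abs_le_of_abs_le_at_critical hL.ne' hω' fun x hx => ?_
    have hquad : ω x ^ 2 + c x * ω x = K - V x := by
      simp only [ω] at hx ⊢
      linarith
    have := abs_le.1 hK
    have := abs_le.1 (hVM x)
    have := abs_le.1 (hcM x)
    rcases abs_cases (ω x) with ⟨h, _⟩ | ⟨h, _⟩ <;> rw [h] <;> nlinarith
  have huM : ∀ x, |u x| ≤ M := fun x => by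
    have : u x = ω x + c x := by simp only [ω]; ring
    rw [this]
    linarith [abs_add_le (ω x) (c x), hωM x, hcM x]
  have hρM : ∀ x, |K - V x - u x * ω x| ≤ 2 * MV + M ^ 2 := fun x => by
    have hωx : |ω x| ≤ M := (hωM x).trans (by linarith)
    calc |K - V x - u x * ω x| ≤ |K| + |V x| + |u x| * |ω x| := by
          rw [← abs_mul]
          exact (abs_sub _ _).trans (add_le_add_left (abs_sub _ _) _)
      _ ≤ MV + MV + M * M := add_le_add (add_le_add hK (hVM x))
          (mul_le_mul (huM x) hωx (abs_nonneg _) (by positivity))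
      _ = 2 * MV + M ^ 2 := by ring
  have hosc : ∀ x, |ω x - ω 0| ≤ (2 * MV + M ^ 2) * L :=
    hωper.abs_sub_le_of_abs_deriv_le hL hω' hρM 0
  have hid : K * L - ∫ x in (0 : ℝ)..L, V x = ∫ x in (0 : ℝ)..L, u x * (ω x - ω 0) := by
    have hρ0 : ∫ x in (0 : ℝ)..L, (K - V x - u x * ω x) = 0 :=
      hωper.intervalIntegral_eq_zero_of_hasDerivAt hω' (by fun_prop)
    have huω : IntervalIntegrable (fun x => u x * ω x) MeasureTheory.volume 0 L :=
      (huc.mul hωc).intervalIntegrable _ _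
    rw [integral_sub (f := fun x => K - V x) ((continuous_const.sub hV).intervalIntegrable _ _)
        huω,
      integral_sub intervalIntegrable_const (hV.intervalIntegrable _ _), integral_const,
      smul_eq_mul, sub_zero] at hρ0
    simp_rw [mul_sub]
    rw [integral_sub (g := fun x => u x * ω 0) huω
        ((huc.mul continuous_const).intervalIntegrable _ _),
      integral_mul_const, integral_logDeriv_eq_zero hφ hφper hφpos]
    linarith
  rw [hid]
  calc |∫ x in (0 : ℝ)..L, u x * (ω x - ω 0)| ≤ M * ((2 * MV + M ^ 2) * L) * |L - 0| :=
        norm_integral_le_of_norm_le_const (C := M * ((2 * MV + M ^ 2) * L)) fun x _ => by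
          rw [Real.norm_eq_abs, abs_mul]
          exact mul_le_mul (huM x) (hosc x) (abs_nonneg _) (by positivity)
    _ = M * (2 * MV + M ^ 2) * L ^ 2 := by rw [sub_zero, abs_of_pos hL]; ring

end AdjointEigenproblem

theorem intervalIntegral_comp_div_self {f : ℝ → ℝ} {L : ℝ} (hL : L ≠ 0) :
    ∫ x in (0 : ℝ)..L, f (x / L) = L * ∫ s in (0 : ℝ)..1, f s := by
  rw [integral_comp_div f hL, zero_div, div_self hL, smul_eq_mul]

/-- homogenization limit in rapidly oscillating media. If for every `L > 0`
the adjoint principal eigenvalue problem for `𝓛_λ[r_L;b_L]` (with `r_L(x) = r(x/L)`,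
`b_L(x) = b(x/L)`) has an `L`-periodic positive normalized eigenfunction `Φ L` with
eigenvalue `K L`, then `K L → ∫₀¹ r + λ∫₀¹ b + λ²` as `L → 0⁺`. -/
theorem stmt14 (r b : ℝ → ℝ) (lam : ℝ)
    (hr : Continuous r) (hrper : Function.Periodic r 1)
    (hb : ContDiff ℝ 1 b) (hbper : Function.Periodic b 1)
    (K : ℝ → ℝ) (Φ : ℝ → ℝ → ℝ)
    (hyp : ∀ L : ℝ, 0 < L →
      ContDiff ℝ 2 (Φ L) ∧
      Function.Periodic (Φ L) L ∧
      (∀ x, 0 < Φ L x) ∧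
      (∫ x in (0:ℝ)..1, (Φ L x) ^ 2) = 1 ∧
      (∀ x : ℝ,
        deriv (deriv (Φ L)) x
          - deriv (fun y => (b (y / L) + 2 * lam) * Φ L y) x
          + (r (x / L) + lam * b (x / L) + lam ^ 2) * Φ L x = K L * Φ L x)) :
    Filter.Tendsto K (nhdsWithin 0 (Set.Ioi 0))
      (nhds ((∫ s in (0:ℝ)..1, r s) + lam * (∫ s in (0:ℝ)..1, b s) + lam ^ 2)) := by
  have hbc := hb.continuous
  have hT : ∫ s in (0:ℝ)..1, (r s + lam * b s + lam ^ 2)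
      = (∫ s in (0:ℝ)..1, r s) + lam * (∫ s in (0:ℝ)..1, b s) + lam ^ 2 := by
    rw [integral_add ((hr.fun_add (continuous_const.fun_mul hbc)).intervalIntegrable _ _)
        intervalIntegrable_const,
      integral_add (hr.intervalIntegrable _ _)
        ((continuous_const.fun_mul hbc).intervalIntegrable _ _),
      integral_const_mul, integral_const, smul_eq_mul, sub_zero, one_mul]
  have hcper : Periodic (fun s => b s + 2 * lam) 1 := fun s => by simp only [hbper s]
  have hVper : Periodic (fun s => r s + lam * b s + lam ^ 2) 1 := fun s => by
    simp only [hrper s, hbper s]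
  obtain ⟨Mc, hMc⟩ := hcper.exists_abs_le_of_continuous one_ne_zero (by fun_prop)
  obtain ⟨MV, hMV⟩ := hVper.exists_abs_le_of_continuous one_ne_zero (by fun_prop)
  rw [← hT]
  refine tendsto_nhdsWithin_Ioi_of_abs_sub_le_mul
    (C := (1 + 2 * Mc + 2 * MV) * (2 * MV + (1 + 2 * Mc + 2 * MV) ^ 2)) fun L hL => ?_
  obtain ⟨hφ, hφper, hφpos, -, heq⟩ := hyp L hL
  have hbound := abs_eigenvalue_mul_sub_integral_le (c := fun y => b (y / L) + 2 * lam) hL hφ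
    hφper hφpos ((hb.comp (contDiff_id.div_const L)).add contDiff_const)
    (by simpa only [one_mul] using hcper.div_const L) (by fun_prop)
    (fun x => hMc (x / L)) (fun x => hMV (x / L)) heq
  rw [intervalIntegral_comp_div_self (f := fun s => r s + lam * b s + lam ^ 2) hL.ne',
    mul_comm L, ← sub_mul, abs_mul, abs_of_pos hL] at hbound
  exact le_of_mul_le_mul_right (hbound.trans_eq (by ring)) hL
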